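/- For every a ∈ [0, 1] there exists a sequence (G_n)_{n≥1} of finite groups such that cdeg(G_n) → a as n → ∞; moreover each G_n can be taken to be a finite direct product of modular groups M_{p³} over distinct odd primes p. -/

import Mathlib

open Filter

/-- The cyclicity degree of a group: the ratio of the number of cyclic
subgroups to the number of all subgroups. -/
noncomputable def cdeg (G : Type*) [Group G] : ℝ :=
  (Nat.card {H : Subgroup G // IsCyclic H} : ℝ) / (Nat.card (Subgroup G) : ℝ)

/-- The `k`-th odd prime (0-indexed). -/
noncomputable def oddPrime (k : ℕ) : ℕ := Nat.nth (fun q => Nat.Prime q ∧ q ≠ 2) k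

/-- `K` is (isomorphic to) the modular group `M_{p³}`: the unique nonabelian
group of order `p³` and exponent `p²` (`p` odd). -/
def IsModularPCubed (p : ℕ) (K : Type*) [Group K] : Prop :=
  Nat.card K = p ^ 3 ∧ Monoid.exponent K = p ^ 2 ∧ ¬ ∀ x y : K, Commute x y


/-! The modular group M_{p³} as ZMod (p²) × ZMod p with twisted multiplication. -/

variable (p : ℕ)

def MG : Type := ZMod (p ^ 2) × ZMod p

namespace MG

variable {p}

/-- the embedding `ZMod p → ZMod (p²)`, `k ↦ p * k.val`. -/
def e (k : ZMod p) : ZMod (p ^ 2) := (p : ZMod (p ^ 2)) * (k.val : ZMod (p ^ 2))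

lemma p_mul_p : (p : ZMod (p ^ 2)) * (p : ZMod (p ^ 2)) = 0 := by
  have : ((p ^ 2 : ℕ) : ZMod (p ^ 2)) = 0 := ZMod.natCast_self _
  push_cast at this
  rw [← this]; ring

lemma p_mul_e (k : ZMod p) : (p : ZMod (p ^ 2)) * e k = 0 := by
  rw [e, ← mul_assoc, p_mul_p, zero_mul]

lemma e_mul_e (k l : ZMod p) : e k * e l = 0 := by
  rw [e, e, mul_mul_mul_comm, p_mul_p, zero_mul]

lemma e_add (k l : ZMod p) : e (k + l) = e k + e l := by
  rcases Nat.eq_zero_or_pos p with h | h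
  · subst h; simp [e]
  haveI : NeZero p := ⟨h.ne'⟩
  have h1 : (k + l).val = (k.val + l.val) % p := by
    rw [ZMod.val_add]
  rw [e, e, e, h1]
  have h2 : k.val + l.val = (k.val + l.val) % p + p * ((k.val + l.val) / p) :=
    (Nat.mod_add_div _ _).symm
  have : ((k.val + l.val : ℕ) : ZMod (p ^ 2)) = (((k.val + l.val) % p : ℕ) : ZMod (p ^ 2))
      + (p : ZMod (p ^ 2)) * (((k.val + l.val) / p : ℕ) : ZMod (p ^ 2)) := by
    conv_lhs => rw [h2]
    push_cast
    ring
  push_cast at this ⊢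
  have hp2 := p_mul_p (p := p)
  linear_combination (-(p:ZMod (p^2)))*this - ((((k.val + l.val) / p : ℕ) : ZMod (p ^ 2)))*hp2

lemma e_zero : e (0 : ZMod p) = 0 := by simp [e]

instance : Group (MG p) where
  mul x y := (x.1 + y.1 + e x.2 * y.1, x.2 + y.2)
  one := ((0 : ZMod (p ^ 2)), (0 : ZMod p))
  inv x := (-x.1 + e x.2 * x.1, -x.2)
  mul_assoc x y z := by
    show (_, _) = (_ : ZMod (p^2) × ZMod p)
    refine Prod.ext ?_ ?_
    · show x.1 + y.1 + e x.2 * y.1 + z.1 + e (x.2 + y.2) * z.1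
        = x.1 + (y.1 + z.1 + e y.2 * z.1) + e x.2 * (y.1 + z.1 + e y.2 * z.1)
      rw [e_add]
      have h := e_mul_e x.2 y.2
      linear_combination (-z.1) * h
    · show x.2 + y.2 + z.2 = x.2 + (y.2 + z.2); ring
  one_mul x := by
    show ((0 : ZMod (p^2)) + x.1 + e 0 * x.1, (0 : ZMod p) + x.2) = x
    rw [e_zero]; simp
    rfl
  mul_one x := by
    show (x.1 + 0 + e x.2 * 0, x.2 + 0) = x
    simp
    rfl
  inv_mul_cancel x := by
    show ((-x.1 + e x.2 * x.1) + x.1 + e (-x.2) * x.1, -x.2 + x.2)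
        = ((0 : ZMod (p^2)), (0 : ZMod p))
    refine Prod.ext ?_ ?_
    · show (-x.1 + e x.2 * x.1) + x.1 + e (-x.2) * x.1 = 0
      have : e (-x.2) + e x.2 = 0 := by rw [← e_add]; simp [e_zero]
      have h2 : e (-x.2) = - e x.2 := by linear_combination this
      rw [h2]; ring
    · show -x.2 + x.2 = 0; ring

/-- constructor, to keep `MG p` from unfolding to a product type. -/
def mk (a : ZMod (p ^ 2)) (k : ZMod p) : MG p := (a, k)

@[simp] lemma mk_fst (a : ZMod (p ^ 2)) (k : ZMod p) : (mk a k).1 = a := rfl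
@[simp] lemma mk_snd (a : ZMod (p ^ 2)) (k : ZMod p) : (mk a k).2 = k := rfl

lemma mul_def (x y : MG p) : x * y = (x.1 + y.1 + e x.2 * y.1, x.2 + y.2) := rfl

lemma one_def : (1 : MG p) = ((0 : ZMod (p ^ 2)), (0 : ZMod p)) := rfl

lemma ext_iff {x y : MG p} : x = y ↔ x.1 = y.1 ∧ x.2 = y.2 := Prod.ext_iff

lemma e_nat_mul (n : ℕ) (k : ZMod p) : e ((n : ZMod p) * k) = (n : ZMod (p ^ 2)) * e k := by
  induction n with
  | zero => simp [e_zero]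
  | succ m ih =>
    push_cast
    rw [add_mul, one_mul, e_add, ih, add_mul, one_mul]

lemma pow_def (x : MG p) (n : ℕ) :
    x ^ n = (x.1 * n + e x.2 * x.1 * (n.choose 2 : ℕ), (n : ZMod p) * x.2) := by
  induction n with
  | zero => simp [one_def]; rfl
  | succ m ih =>
    rw [pow_succ, ih]; erw [mul_def]
    refine Prod.ext ?_ ?_
    · show x.1 * (m:ZMod (p^2)) + e x.2 * x.1 * (m.choose 2 : ℕ) + x.1
          + e ((m : ZMod p) * x.2) * x.1 = x.1 * ((m+1 : ℕ):ZMod (p^2))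
          + e x.2 * x.1 * (((m+1).choose 2 : ℕ) : ZMod (p^2))
      rw [e_nat_mul]
      have h : (m+1).choose 2 = m.choose 2 + m := by
        rw [Nat.choose_succ_succ m 1, Nat.choose_one_right, Nat.add_comm]
      rw [h]
      push_cast
      ring
    · show (m : ZMod p) * x.2 + x.2 = ((m+1:ℕ) : ZMod p) * x.2
      push_cast; ring

lemma pow_p (hp : p.Prime) (hodd : p ≠ 2) (x : MG p) :
    x ^ p = ((p : ZMod (p ^ 2)) * x.1, 0) := by
  rw [pow_def]
  refine Prod.ext ?_ ?_
  · show x.1 * p + e x.2 * x.1 * (p.choose 2 : ℕ) = (p : ZMod (p^2)) * x.1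
    have h2 : 2 ∣ p - 1 := by
      have := hp.two_le
      obtain ⟨m, hm⟩ := hp.odd_of_ne_two hodd
      omega
    have h : p.choose 2 = p * ((p-1)/2) := by
      rw [Nat.choose_two_right, Nat.mul_div_assoc _ h2]
    rw [h]
    push_cast
    rw [show e x.2 * x.1 * ((p : ZMod (p^2)) * ((((p-1)/2 : ℕ)) : ZMod (p^2)))
        = (((p:ZMod (p^2))) * e x.2) * (x.1 * (((p-1)/2 : ℕ) : ZMod (p^2))) by ring,
      p_mul_e, zero_mul, add_zero, mul_comm]
  · show (p : ZMod p) * x.2 = 0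
    rw [ZMod.natCast_self, zero_mul]

lemma pow_p_sq (hp : p.Prime) (hodd : p ≠ 2) (x : MG p) : x ^ (p ^ 2) = 1 := by
  rw [pow_two, pow_mul, pow_p hp hodd, pow_p hp hodd]; erw [ext_iff, one_def]
  refine ⟨?_, rfl⟩
  show (p : ZMod (p^2)) * ((p : ZMod (p^2)) * x.1) = 0
  rw [← mul_assoc, p_mul_p, zero_mul]

lemma pcast_ne_zero (hp : 2 ≤ p) : (p : ZMod (p ^ 2)) ≠ 0 := by
  rw [Ne, ZMod.natCast_eq_zero_iff]
  intro h
  have := Nat.le_of_dvd (by omega) h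
  nlinarith

theorem finite (hp : p ≠ 0) : Finite (MG p) := by
  haveI : NeZero p := ⟨hp⟩
  haveI : NeZero (p ^ 2) := ⟨pow_ne_zero _ hp⟩
  exact inferInstanceAs (Finite (ZMod (p^2) × ZMod p))

lemma card (hp : p ≠ 0) : Nat.card (MG p) = p ^ 3 := by
  haveI : NeZero p := ⟨hp⟩
  haveI : NeZero (p ^ 2) := ⟨pow_ne_zero _ hp⟩
  show Nat.card (ZMod (p^2) × ZMod p) = p ^ 3
  rw [Nat.card_prod, Nat.card_zmod, Nat.card_zmod]
  ring

/-- the standard generator of order p². -/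
def gen : MG p := ((1 : ZMod (p ^ 2)), (0 : ZMod p))

lemma orderOf_gen (hp : p.Prime) (hodd : p ≠ 2) : orderOf (gen : MG p) = p ^ 2 := by
  have h1 : (gen : MG p) ^ (p^2) = 1 := pow_p_sq hp hodd _
  have hdvd : orderOf (gen : MG p) ∣ p ^ 2 := orderOf_dvd_of_pow_eq_one h1
  have hnp : (gen : MG p) ^ p ≠ 1 := by
    rw [pow_p hp hodd]
    intro h
    erw [ext_iff, one_def] at h
    exact pcast_ne_zero hp.two_le (by simpa [gen] using h.1)
  rcases (Nat.dvd_prime_pow hp).1 hdvd with ⟨k, hk, horder⟩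
  interval_cases k
  · exfalso; apply hnp
    have h0 : orderOf (gen : MG p) = 1 := by simpa using horder
    rw [orderOf_eq_one_iff] at h0
    rw [h0, one_pow]
  · exfalso; apply hnp
    rw [pow_one] at horder
    have h2 := pow_orderOf_eq_one (gen : MG p)
    rw [horder] at h2
    exact h2
  · simpa using horder

lemma exponent (hp : p.Prime) (hodd : p ≠ 2) : Monoid.exponent (MG p) = p ^ 2 := by
  refine Nat.dvd_antisymm ?_ ?_
  · exact Monoid.exponent_dvd_of_forall_pow_eq_one (pow_p_sq hp hodd)
  · rw [← orderOf_gen hp hodd]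
    exact Monoid.order_dvd_exponent _

lemma not_comm (hp : p.Prime) :
    ¬ ∀ x y : MG p, Commute x y := by
  intro h
  have := h ((1 : ZMod (p^2)), (0:ZMod p)) ((0 : ZMod (p^2)), (1:ZMod p))
  unfold Commute SemiconjBy at this
  erw [mul_def, mul_def] at this
  erw [ext_iff] at this
  obtain ⟨h1, -⟩ := this
  simp only [e_zero, zero_mul] at h1
  have he : e (1 : ZMod p) = (p : ZMod (p^2)) := by
    rw [e, ZMod.val_one_eq_one_mod]
    have : 1 % p = 1 := Nat.mod_eq_of_lt hp.one_lt
    rw [this, Nat.cast_one, mul_one]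
  rw [he] at h1
  apply pcast_ne_zero hp.two_le
  linear_combination -h1

section Subgroups

/-- cast `ZMod (p^2) → ZMod p`. -/
def castp : ZMod (p ^ 2) →+* ZMod p := ZMod.castHom (dvd_pow_self p two_ne_zero) (ZMod p)

lemma castp_e (k : ZMod p) : castp (e k) = 0 := by
  rw [e, map_mul]
  have : (castp ((p : ZMod (p^2)))) = ((p : ℕ) : ZMod p) := map_natCast castp p
  rw [this, ZMod.natCast_self, zero_mul]

lemma val_e (hp : p ≠ 0) (k : ZMod p) : (e k : ZMod (p^2)).val = p * k.val := by
  haveI : NeZero p := ⟨hp⟩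
  haveI : NeZero (p ^ 2) := ⟨pow_ne_zero _ hp⟩
  rw [e, ← Nat.cast_mul, ZMod.val_natCast, Nat.mod_eq_of_lt]
  have hk := k.val_lt
  have hp0 : 0 < p := Nat.pos_of_ne_zero hp
  nlinarith

lemma e_injective (hp : p ≠ 0) : Function.Injective (e (p := p)) := by
  intro k l h
  haveI : NeZero p := ⟨hp⟩
  have := congrArg ZMod.val h
  rw [val_e hp, val_e hp] at this
  have h2 : k.val = l.val := Nat.eq_of_mul_eq_mul_left (Nat.pos_of_ne_zero hp) this
  exact ZMod.val_injective _ h2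

lemma exists_e (hp : p ≠ 0) {a : ZMod (p ^ 2)} (ha : (p : ZMod (p^2)) * a = 0) :
    ∃ k : ZMod p, a = e k := by
  haveI : NeZero p := ⟨hp⟩
  haveI : NeZero (p ^ 2) := ⟨pow_ne_zero _ hp⟩
  have h1 : (p ^ 2) ∣ p * a.val := by
    have : ((p * a.val : ℕ) : ZMod (p^2)) = 0 := by
      push_cast
      rw [ZMod.natCast_val, ZMod.cast_id, ha]
    exact (ZMod.natCast_eq_zero_iff _ _).1 this
  have hpd : p ∣ a.val := by
    rcases h1 with ⟨c, hc⟩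
    refine ⟨c, ?_⟩
    have hp0 : 0 < p := Nat.pos_of_ne_zero hp
    apply Nat.eq_of_mul_eq_mul_left hp0
    rw [hc]; ring
  have hlt : a.val / p < p := by
    have h2 : a.val < p * p := by have := a.val_lt; nlinarith
    exact Nat.div_lt_of_lt_mul h2
  refine ⟨((a.val / p : ℕ) : ZMod p), ?_⟩
  rw [e, ZMod.val_natCast, Nat.mod_eq_of_lt hlt, ← Nat.cast_mul, Nat.mul_div_cancel' hpd,
    ZMod.natCast_val, ZMod.cast_id]

lemma p_mul_eq_zero_iff (hp : p ≠ 0) (a : ZMod (p ^ 2)) :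
    (p : ZMod (p^2)) * a = 0 ↔ castp a = 0 := by
  constructor
  · intro h
    rcases exists_e hp h with ⟨k, rfl⟩
    exact castp_e k
  · intro h
    haveI : NeZero p := ⟨hp⟩
    have : (p : ℕ) ∣ a.val := by
      have : ((a.val : ℕ) : ZMod p) = 0 := by
        rwa [castp, ZMod.castHom_apply, ZMod.cast_eq_val] at h
      exact (ZMod.natCast_eq_zero_iff _ _).1 this
    rcases this with ⟨c, hc⟩
    have hval : a = ((a.val : ℕ) : ZMod (p^2)) := by
      rw [ZMod.natCast_val, ZMod.cast_id]
    rw [hval, hc]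
    push_cast
    rw [← mul_assoc, p_mul_p, zero_mul]

variable (p) in
/-- The center, of order `p`. -/
def ZC : Subgroup (MG p) := Subgroup.zpowers (mk (p : ZMod (p ^ 2)) 0)

variable (p) in
/-- The subgroup `Ω` of elements of order dividing `p`, of order `p²`. -/
def Om : Subgroup (MG p) where
  carrier := {x | (p : ZMod (p^2)) * x.1 = 0}
  mul_mem' := by
    intro x y hx hy
    show (p : ZMod (p^2)) * (x.1 + y.1 + e x.2 * y.1) = 0
    have h3 : (p:ZMod (p^2)) * e x.2 = 0 := p_mul_e x.2
    simp only [Set.mem_setOf_eq] at hx hy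
    linear_combination hx + hy + y.1 * h3
  one_mem' := by show (p : ZMod (p^2)) * (1 : MG p).1 = 0; rw [one_def]; simp
  inv_mem' := by
    intro x hx
    show (p : ZMod (p^2)) * (-x.1 + e x.2 * x.1) = 0
    simp only [Set.mem_setOf_eq] at hx
    have h3 : (p:ZMod (p^2)) * e x.2 = 0 := p_mul_e x.2
    linear_combination -hx + x.1 * h3

/-- The `p+1` "line" subgroups of order `p` inside `Ω` with nontrivial second
coordinate. -/
def T (t : ZMod p) : Subgroup (MG p) where
  carrier := {x | x.1 = e (x.2 * t)}
  mul_mem' := by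
    intro x y hx hy
    show x.1 + y.1 + e x.2 * y.1 = e ((x.2 + y.2) * t)
    simp only [Set.mem_setOf_eq] at hx hy
    rw [add_mul, e_add, hx, hy, e_mul_e]
    ring
  one_mem' := by
    show (1 : MG p).1 = e ((1 : MG p).2 * t)
    rw [one_def]
    simp [e_zero]
  inv_mem' := by
    intro x hx
    show -x.1 + e x.2 * x.1 = e ((-x.2) * t)
    simp only [Set.mem_setOf_eq] at hx
    have h1 : e ((-x.2) * t) + e (x.2 * t) = 0 := by
      rw [← e_add]; ring_nf; exact e_zero
    rw [hx, e_mul_e]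
    linear_combination -h1

/-- The `p` cyclic subgroups of order `p²`. -/
def S (t : ZMod p) : Subgroup (MG p) where
  carrier := {x | x.2 = t * castp x.1}
  mul_mem' := by
    intro x y hx hy
    show x.2 + y.2 = t * castp (x.1 + y.1 + e x.2 * y.1)
    simp only [Set.mem_setOf_eq] at hx hy
    rw [map_add, map_add, map_mul, castp_e, zero_mul, add_zero, hx, hy]
    ring
  one_mem' := by
    show (1 : MG p).2 = t * castp (1 : MG p).1
    rw [one_def]; simp
  inv_mem' := by
    intro x hx
    show -x.2 = t * castp (-x.1 + e x.2 * x.1)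
    simp only [Set.mem_setOf_eq] at hx
    rw [map_add, map_neg, map_mul, castp_e, zero_mul, add_zero, hx]
    ring

end Subgroups

section Cards

lemma isCyclic_zpowers' {G : Type*} [Group G] (g : G) : IsCyclic (Subgroup.zpowers g) := by
  refine ⟨⟨⟨g, Subgroup.mem_zpowers g⟩, fun x => ?_⟩⟩
  rcases x.2 with ⟨n, hn⟩
  exact ⟨n, Subtype.ext (by simpa using hn)⟩

variable {p : ℕ}

lemma orderOf_unit (hp : p.Prime) (hodd : p ≠ 2) {x : MG p}
    (hx : (p : ZMod (p^2)) * x.1 ≠ 0) : orderOf x = p ^ 2 := by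
  have h1 : x ^ (p^2) = 1 := pow_p_sq hp hodd x
  have hdvd : orderOf x ∣ p ^ 2 := orderOf_dvd_of_pow_eq_one h1
  have hnp : x ^ p ≠ 1 := by
    rw [pow_p hp hodd]
    intro h
    erw [ext_iff, one_def] at h
    exact hx h.1
  rcases (Nat.dvd_prime_pow hp).1 hdvd with ⟨k, hk, horder⟩
  interval_cases k
  · exfalso; apply hnp
    have h0 : orderOf x = 1 := by simpa using horder
    rw [orderOf_eq_one_iff] at h0
    rw [h0, one_pow]
  · exfalso; apply hnp
    rw [pow_one] at horder
    have h2 := pow_orderOf_eq_one x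
    rw [horder] at h2
    exact h2
  · simpa using horder

lemma z_pow (n : ℕ) : (mk (p : ZMod (p ^ 2)) 0) ^ n
    = mk ((p : ZMod (p^2)) * (n : ZMod (p^2))) 0 := by
  rw [pow_def]; erw [ext_iff]
  constructor
  · show (p : ZMod (p^2)) * (n : ZMod (p^2)) + e 0 * _ * _
        = (p : ZMod (p^2)) * (n : ZMod (p^2))
    rw [e_zero]; ring
  · show (n : ZMod p) * 0 = 0
    ring

lemma orderOf_z (hp : p.Prime) (hodd : p ≠ 2) :
    orderOf (mk (p : ZMod (p ^ 2)) (0 : ZMod p)) = p := by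
  haveI : Fact p.Prime := ⟨hp⟩
  apply orderOf_eq_prime
  · rw [z_pow, ext_iff, one_def]
    exact ⟨by rw [mk_fst, p_mul_p], rfl⟩
  · intro h
    rw [ext_iff, one_def] at h
    exact pcast_ne_zero hp.two_le h.1

lemma card_ZC (hp : p.Prime) (hodd : p ≠ 2) : Nat.card (ZC p) = p := by
  rw [ZC, Nat.card_zpowers, orderOf_z hp hodd]

lemma mem_ZC_snd {x : MG p} (hx : x ∈ ZC p) : x.2 = 0 := by
  have hm : (mk (p : ZMod (p ^ 2)) 0) ∈ S (0 : ZMod p) := by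
    show (0 : ZMod p) = 0 * castp _
    rw [zero_mul]
  have h : ZC p ≤ S 0 := Subgroup.zpowers_le.mpr hm
  have h2 : x.2 = 0 * castp x.1 := h hx
  rwa [zero_mul] at h2

lemma mem_ZC_fst {x : MG p} (hx : x ∈ ZC p) : (p : ZMod (p^2)) * x.1 = 0 := by
  have hm : (mk (p : ZMod (p ^ 2)) 0) ∈ Om p := by
    show (p : ZMod (p^2)) * (mk (p : ZMod (p ^ 2)) 0).1 = 0
    rw [mk_fst, p_mul_p]
  have h : ZC p ≤ Om p := Subgroup.zpowers_le.mpr hm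
  exact h hx

lemma mem_ZC_iff (hp : p ≠ 0) {x : MG p} :
    x ∈ ZC p ↔ x.2 = 0 ∧ (p : ZMod (p^2)) * x.1 = 0 := by
  refine ⟨fun hx => ⟨mem_ZC_snd hx, mem_ZC_fst hx⟩, fun ⟨h2, h1⟩ => ?_⟩
  haveI : NeZero p := ⟨hp⟩
  rcases exists_e hp h1 with ⟨s, hs⟩
  rw [ZC, Subgroup.mem_zpowers_iff]
  refine ⟨(s.val : ℤ), ?_⟩
  rw [zpow_natCast, z_pow, ext_iff]
  refine ⟨?_, ?_⟩
  · rw [mk_fst, hs, e]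
  · rw [mk_snd, h2]

lemma T_mem_gen (t : ZMod p) : (mk (e t) 1) ∈ T t := by
  show e t = e (1 * t); rw [one_mul]

lemma T_eq_zpowers (hp : p ≠ 0) (t : ZMod p) :
    T t = Subgroup.zpowers (mk (e t) 1) := by
  haveI : NeZero p := ⟨hp⟩
  refine le_antisymm ?_ (Subgroup.zpowers_le.mpr (T_mem_gen t))
  intro x hx
  have hx1 : x.1 = e (x.2 * t) := hx
  rw [Subgroup.mem_zpowers_iff]
  refine ⟨(x.2.val : ℤ), ?_⟩
  rw [zpow_natCast, pow_def]; erw [ext_iff]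
  constructor
  · show e t * (x.2.val : ZMod (p^2)) + e 1 * (e t) * _ = x.1
    rw [e_mul_e, zero_mul, add_zero, hx1, mul_comm, ← e_nat_mul]
    congr 2
    rw [ZMod.natCast_val, ZMod.cast_id]
  · show ((x.2.val : ℕ) : ZMod p) * 1 = x.2
    rw [mul_one, ZMod.natCast_val, ZMod.cast_id]

lemma orderOf_Tgen (hp : p.Prime) (hodd : p ≠ 2) (t : ZMod p) :
    orderOf (mk (e t) (1 : ZMod p)) = p := by
  haveI : Fact p.Prime := ⟨hp⟩
  haveI : Fact (1 < p) := ⟨hp.one_lt⟩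
  apply orderOf_eq_prime
  · rw [pow_p hp hodd]; erw [ext_iff, one_def]
    exact ⟨by rw [mk_fst, p_mul_e], rfl⟩
  · intro h
    rw [ext_iff, one_def] at h
    exact one_ne_zero (h.2 : (1 : ZMod p) = 0)

lemma card_T (hp : p.Prime) (hodd : p ≠ 2) (t : ZMod p) : Nat.card (T t) = p := by
  rw [T_eq_zpowers hp.pos.ne' t, Nat.card_zpowers, orderOf_Tgen hp hodd]

lemma card_S (hp : p ≠ 0) (t : ZMod p) : Nat.card (S t) = p ^ 2 := by
  haveI : NeZero p := ⟨hp⟩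
  haveI : NeZero (p ^ 2) := ⟨pow_ne_zero _ hp⟩
  have hb : Function.Bijective
      (fun a : ZMod (p^2) => (⟨mk a (t * castp a), rfl⟩ : S t)) := by
    constructor
    · intro a b hab
      have := congrArg (fun y : S t => (y : MG p).1) hab
      exact this
    · rintro ⟨x, hx⟩
      refine ⟨x.1, Subtype.ext ?_⟩
      rw [ext_iff]
      exact ⟨rfl, (hx : x.2 = _).symm⟩
  rw [← Nat.card_eq_of_bijective _ hb, Nat.card_zmod]

lemma S_mem_gen (t : ZMod p) : (mk (1 : ZMod (p^2)) t) ∈ S t := by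
  show t = t * castp 1; rw [map_one, mul_one]

lemma S_eq_zpowers (hp : p.Prime) (hodd : p ≠ 2) (t : ZMod p) :
    S t = Subgroup.zpowers (mk (1 : ZMod (p^2)) t) := by
  haveI : Finite (MG p) := finite hp.pos.ne'
  have h1 : Subgroup.zpowers (mk (1 : ZMod (p^2)) t) ≤ S t :=
    Subgroup.zpowers_le.mpr (S_mem_gen t)
  refine (Subgroup.eq_of_le_of_card_ge h1 ?_).symm
  rw [card_S hp.pos.ne' t, Nat.card_zpowers]
  rw [orderOf_unit hp hodd (by
    show (p : ZMod (p^2)) * (mk (1 : ZMod (p^2)) t).1 ≠ 0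
    rw [mk_fst, mul_one]; exact pcast_ne_zero hp.two_le)]

lemma isCyclic_S (hp : p.Prime) (hodd : p ≠ 2) (t : ZMod p) : IsCyclic (S t) := by
  rw [S_eq_zpowers hp hodd t]; exact isCyclic_zpowers' _

lemma isCyclic_T (hp : p.Prime) (hodd : p ≠ 2) (t : ZMod p) : IsCyclic (T t) := by
  rw [T_eq_zpowers hp.pos.ne' t]; exact isCyclic_zpowers' _

lemma isCyclic_ZC : IsCyclic (ZC p) := isCyclic_zpowers' _

lemma card_Om (hp : p ≠ 0) : Nat.card (Om p) = p ^ 2 := by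
  haveI : NeZero p := ⟨hp⟩
  have hb : Function.Bijective
      (fun sk : ZMod p × ZMod p => (⟨mk (e sk.1) sk.2, p_mul_e sk.1⟩ : Om p)) := by
    constructor
    · intro a b hab
      have h1 := congrArg (fun y : Om p => (y : MG p).1) hab
      have h2 := congrArg (fun y : Om p => (y : MG p).2) hab
      exact Prod.ext (e_injective hp h1) h2
    · rintro ⟨x, hx⟩
      rcases exists_e hp (hx : (p : ZMod (p^2)) * x.1 = 0) with ⟨s, hs⟩
      refine ⟨(s, x.2), Subtype.ext ?_⟩
      rw [ext_iff]
      exact ⟨hs.symm, rfl⟩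
  rw [← Nat.card_eq_of_bijective _ hb, Nat.card_prod, Nat.card_zmod]
  ring

lemma not_isCyclic_Om (hp : p.Prime) (hodd : p ≠ 2) : ¬ IsCyclic (Om p) := by
  intro h
  haveI : Finite (MG p) := finite hp.pos.ne'
  rcases h.exists_generator with ⟨g, hg⟩
  have horder : orderOf g = p ^ 2 := by
    rw [orderOf_eq_card_of_forall_mem_zpowers hg, card_Om hp.pos.ne']
  have hgp : g ^ p = 1 := by
    apply Subtype.ext
    show ((g : MG p) ^ p) = 1
    rw [pow_p hp hodd, (g.2 : (p : ZMod (p^2)) * (g : MG p).1 = 0), one_def]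
  have := orderOf_dvd_of_pow_eq_one hgp
  rw [horder] at this
  have := Nat.le_of_dvd hp.pos this
  nlinarith [hp.two_le]

lemma not_isCyclic_top (hp : p.Prime) :
    ¬ IsCyclic ((⊤ : Subgroup (MG p))) := by
  intro h
  have hG : IsCyclic (MG p) :=
    isCyclic_of_surjective Subgroup.topEquiv.toMonoidHom Subgroup.topEquiv.surjective
  letI := hG.commGroup
  exact not_comm hp fun x y => mul_comm x y

end Cards

section Classification

variable {p : ℕ}

theorem subgroup_cases (hp : p.Prime) (hodd : p ≠ 2) (H : Subgroup (MG p)) :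
    H = ⊥ ∨ H = ZC p ∨ (∃ t, H = T t) ∨ H = Om p ∨ (∃ t, H = S t) ∨ H = ⊤ := by
  haveI : Fact p.Prime := ⟨hp⟩
  haveI : NeZero p := ⟨hp.pos.ne'⟩
  haveI : Finite (MG p) := finite hp.pos.ne'
  by_cases hOm : ∀ x ∈ H, (p : ZMod (p^2)) * x.1 = 0
  · have hHOm : H ≤ Om p := fun x hx => hOm x hx
    by_cases hsnd : ∀ x ∈ H, x.2 = 0
    · -- H ≤ ZC
      have hHZ : H ≤ ZC p := fun x hx => (mem_ZC_iff hp.pos.ne').2 ⟨hsnd x hx, hOm x hx⟩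
      rcases eq_or_ne H ⊥ with hb | hb
      · exact Or.inl hb
      right; left
      have h1 : Nat.card H ∣ p := by
        have := Subgroup.card_dvd_of_le hHZ
        rwa [card_ZC hp hodd] at this
      rcases (Nat.Prime.eq_one_or_self_of_dvd hp _ h1) with h | h
      · exact absurd (Subgroup.eq_bot_of_card_eq _ h) hb
      · exact Subgroup.eq_of_le_of_card_ge hHZ (by rw [card_ZC hp hodd, h])
    · push_neg at hsnd
      rcases hsnd with ⟨x, hxH, hx2⟩
      rcases exists_e hp.pos.ne' (hOm x hxH) with ⟨s, hs⟩
      set t := s * x.2⁻¹ with ht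
      have hxT : x ∈ T t := by
        show x.1 = e (x.2 * t)
        rw [hs, ht]
        congr 1
        rw [mul_comm, mul_assoc, inv_mul_cancel₀ hx2, mul_one]
      have hx1 : x ≠ 1 := fun h => hx2 (by rw [h]; rfl)
      have hTle : T t ≤ H := by
        rw [T_eq_zpowers hp.pos.ne' t]
        apply Subgroup.zpowers_le.mpr
        have hcard : Nat.card (T t) = p := card_T hp hodd t
        have hx1' : (⟨x, hxT⟩ : T t) ≠ 1 := fun h => hx1 (congrArg Subtype.val h)
        have hmem := mem_zpowers_of_prime_card (G := T t) hcard (g' := ⟨mk (e t) 1, T_mem_gen t⟩) hx1'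
        rcases hmem with ⟨n, hn⟩
        have : x ^ n = mk (e t) 1 := by
          have := congrArg (Subtype.val : T t → MG p) hn
          simpa using this
        rw [← this]
        exact Subgroup.zpow_mem H hxH n
      by_cases hHT : H ≤ T t
      · exact Or.inr (Or.inr (Or.inl ⟨t, le_antisymm hHT hTle⟩))
      · right; right; right; left
        have hdvd : Nat.card H ∣ p ^ 2 := by
          have := Subgroup.card_dvd_of_le hHOm
          rwa [card_Om hp.pos.ne'] at this
        have hple : p ∣ Nat.card H := by
          have := Subgroup.card_dvd_of_le hTle
          rwa [card_T hp hodd] at this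
        have hne : Nat.card H ≠ p := by
          intro hcp
          apply hHT
          have : T t = H := Subgroup.eq_of_le_of_card_ge hTle
            (by rw [card_T hp hodd, hcp])
          rw [← this]
        rcases (Nat.dvd_prime_pow hp).1 hdvd with ⟨k, hk, hcard⟩
        interval_cases k
        · exfalso
          rw [pow_zero] at hcard
          rw [hcard] at hple
          have := Nat.le_of_dvd one_pos hple
          have := hp.one_lt
          omega
        · exact absurd (by simpa using hcard) hne
        · exact Subgroup.eq_of_le_of_card_ge hHOm
            (by rw [card_Om hp.pos.ne', hcard])
  · push_neg at hOm
    rcases hOm with ⟨x, hxH, hx⟩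
    have hcast : castp x.1 ≠ 0 := fun h => hx ((p_mul_eq_zero_iff hp.pos.ne' _).2 h)
    set t := x.2 * (castp x.1)⁻¹ with ht
    have hxS : x ∈ S t := by
      show x.2 = t * castp x.1
      rw [ht, mul_assoc, inv_mul_cancel₀ hcast, mul_one]
    have hzpS : Subgroup.zpowers x = S t := by
      refine Subgroup.eq_of_le_of_card_ge (Subgroup.zpowers_le.mpr hxS) ?_
      rw [card_S hp.pos.ne' t, Nat.card_zpowers, orderOf_unit hp hodd hx]
    have hSle : S t ≤ H := by
      rw [← hzpS]
      exact Subgroup.zpowers_le.mpr hxH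
    by_cases hHS : H ≤ S t
    · exact Or.inr (Or.inr (Or.inr (Or.inr (Or.inl ⟨t, le_antisymm hHS hSle⟩))))
    · right; right; right; right; right
      have hdvd : Nat.card H ∣ p ^ 3 := by
        have := Subgroup.card_subgroup_dvd_card H
        rwa [card hp.pos.ne'] at this
      have hple : p ^ 2 ∣ Nat.card H := by
        have := Subgroup.card_dvd_of_le hSle
        rwa [card_S hp.pos.ne'] at this
      have hne : Nat.card H ≠ p ^ 2 := by
        intro hcp
        apply hHS
        have : S t = H := Subgroup.eq_of_le_of_card_ge hSle
          (by rw [card_S hp.pos.ne', hcp])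
        rw [← this]
      rcases (Nat.dvd_prime_pow hp).1 hdvd with ⟨k, hk, hcard⟩
      have hp1 := hp.one_lt
      interval_cases k
      · exfalso
        rw [pow_zero] at hcard
        rw [hcard] at hple
        have h4 := Nat.le_of_dvd one_pos hple
        clear hHS hne
        nlinarith
      · exfalso
        rw [pow_one] at hcard
        rw [hcard] at hple
        have h4 := Nat.le_of_dvd hp.pos hple
        clear hHS hne
        nlinarith
      · exact absurd hcard hne
      · apply Subgroup.eq_top_of_card_eq
        rw [hcard, card hp.pos.ne']

end Classification

section Count

variable {p : ℕ}

lemma ZC_ne_T (hp : 1 < p) (t : ZMod p) : ZC p ≠ T t := by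
  intro h
  haveI : Fact (1 < p) := ⟨hp⟩
  have hm := T_mem_gen t
  rw [← h] at hm
  have h2 := mem_ZC_snd hm
  exact one_ne_zero (h2 : (1 : ZMod p) = 0)

lemma Om_ne_S (hp : 1 < p) (t : ZMod p) : Om p ≠ S t := by
  intro h
  haveI : Fact (1 < p) := ⟨hp⟩
  have hm : (mk (0 : ZMod (p^2)) 1) ∈ Om p := by
    show (p : ZMod (p^2)) * (mk (0 : ZMod (p^2)) 1).1 = 0
    rw [mk_fst, mul_zero]
  rw [h] at hm
  have h2 : (1 : ZMod p) = t * castp (0 : ZMod (p^2)) := hm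
  rw [map_zero, mul_zero] at h2
  exact one_ne_zero h2

lemma T_injective (hp : p ≠ 0) : Function.Injective (T (p := p)) := by
  intro t u h
  have hm := T_mem_gen t
  rw [h] at hm
  have h2 : e t = e ((1 : ZMod p) * u) := hm
  rw [one_mul] at h2
  exact e_injective hp h2

lemma S_injective : Function.Injective (S (p := p)) := by
  intro t u h
  have hm := S_mem_gen t
  rw [h] at hm
  have h2 : t = u * castp (1 : ZMod (p^2)) := hm
  rwa [map_one, mul_one] at h2

variable (p) in
/-- enumeration of all subgroups of `MG p`. -/
def toSub : (Fin 4 ⊕ ZMod p ⊕ ZMod p) → Subgroup (MG p) :=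
  Sum.elim (fun i => ![⊥, ZC p, Om p, ⊤] i) (Sum.elim T S)

lemma card_toSub (hp : p.Prime) (hodd : p ≠ 2) (i : Fin 4 ⊕ ZMod p ⊕ ZMod p) :
    Nat.card (toSub p i)
      = Sum.elim (fun i => ![1, p, p^2, p^3] i)
          (Sum.elim (fun _ => p) (fun _ => p^2)) i := by
  haveI : Finite (MG p) := finite hp.pos.ne'
  rcases i with a | t | t
  · fin_cases a
    · simpa [toSub] using Subgroup.card_bot
    · simpa [toSub] using card_ZC hp hodd
    · simpa [toSub] using card_Om hp.pos.ne'
    · show Nat.card (⊤ : Subgroup (MG p)) = p ^ 3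
      rw [Subgroup.card_top, card hp.pos.ne']
  · exact card_T hp hodd t
  · exact card_S hp.pos.ne' t

lemma toSub_injective (hp : p.Prime) (hodd : p ≠ 2) :
    Function.Injective (toSub p) := by
  haveI : Finite (MG p) := finite hp.pos.ne'
  have hp1 := hp.one_lt
  have k2 : p < p ^ 2 := by nlinarith
  have k3 : p ^ 2 < p ^ 3 := by nlinarith [hp.pos]
  have k4 : 1 < p ^ 2 := lt_trans hp1 k2
  have k5 : 1 < p ^ 3 := lt_trans k4 k3
  have k6 : p < p ^ 3 := lt_trans k2 k3
  intro i j h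
  have hc := congrArg (fun K : Subgroup (MG p) => Nat.card K) h
  rw [card_toSub hp hodd i, card_toSub hp hodd j] at hc
  rcases i with a | t | t <;> rcases j with b | u | u
  · congr 1
    fin_cases a <;> fin_cases b <;> first
      | rfl
      | (exfalso; revert hc; clear h; simp; intro h2; linarith)
  · exfalso
    fin_cases a <;> simp only [Sum.elim_inl, Sum.elim_inr] at hc h <;>
      [skip; exact ZC_ne_T hp1 u (by simpa [toSub] using h); skip; skip] <;>
      (revert hc; clear h; simp [Matrix.cons_val_zero, Matrix.cons_val_one]; intro h2; linarith)
  · exfalso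
    fin_cases a <;> simp only [Sum.elim_inl, Sum.elim_inr] at hc h <;>
      [skip; skip; exact Om_ne_S hp1 u (by simpa [toSub] using h); skip] <;>
      (revert hc; clear h; simp [Matrix.cons_val_zero, Matrix.cons_val_one]; intro h2; linarith)
  · exfalso
    fin_cases b <;> simp only [Sum.elim_inl, Sum.elim_inr] at hc h <;>
      [skip; exact ZC_ne_T hp1 t (by simpa [toSub] using h.symm); skip; skip] <;>
      (revert hc; clear h; simp [Matrix.cons_val_zero, Matrix.cons_val_one]; intro h2; linarith)
  · have := T_injective hp.pos.ne' (show T t = T u by simpa [toSub] using h)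
    rw [this]
  · exfalso; revert hc; clear h; simp; intro h2; linarith
  · exfalso
    fin_cases b <;> simp only [Sum.elim_inl, Sum.elim_inr] at hc h <;>
      [skip; skip; exact Om_ne_S hp1 t (by simpa [toSub] using h.symm); skip] <;>
      (revert hc; clear h; simp [Matrix.cons_val_zero, Matrix.cons_val_one]; intro h2; linarith)
  · exfalso; revert hc; clear h; simp; intro h2; linarith
  · have := S_injective (show S t = S u by simpa [toSub] using h)
    rw [this]

lemma toSub_surjective (hp : p.Prime) (hodd : p ≠ 2) :
    Function.Surjective (toSub p) := by
  intro H
  rcases subgroup_cases hp hodd H with h | h | ⟨t, h⟩ | h | ⟨t, h⟩ | h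
  · exact ⟨Sum.inl 0, h.symm⟩
  · exact ⟨Sum.inl 1, h.symm⟩
  · exact ⟨Sum.inr (Sum.inl t), h.symm⟩
  · exact ⟨Sum.inl 2, h.symm⟩
  · exact ⟨Sum.inr (Sum.inr t), h.symm⟩
  · exact ⟨Sum.inl 3, h.symm⟩

lemma card_subgroup (hp : p.Prime) (hodd : p ≠ 2) :
    Nat.card (Subgroup (MG p)) = 2 * p + 4 := by
  haveI : NeZero p := ⟨hp.pos.ne'⟩
  rw [← Nat.card_eq_of_bijective _ ⟨toSub_injective hp hodd, toSub_surjective hp hodd⟩]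
  rw [Nat.card_sum, Nat.card_sum, Nat.card_eq_fintype_card (α := Fin 4),
    Nat.card_zmod]
  simp [Fintype.card_fin]
  ring

variable (p) in
/-- enumeration of the cyclic subgroups of `MG p`. -/
noncomputable def toSubC (hp : p.Prime) (hodd : p ≠ 2) :
    (Fin 2 ⊕ ZMod p ⊕ ZMod p) → {H : Subgroup (MG p) // IsCyclic H} :=
  Sum.elim (fun i => ![⟨⊥, inferInstance⟩, ⟨ZC p, isCyclic_ZC⟩] i)
    (Sum.elim (fun t => ⟨T t, isCyclic_T hp hodd t⟩)
      (fun t => ⟨S t, isCyclic_S hp hodd t⟩))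

lemma toSubC_injective (hp : p.Prime) (hodd : p ≠ 2) :
    Function.Injective (toSubC p hp hodd) := by
  intro i j h
  have h2 : toSub p (i.map (fun a => (⟨a.1, by omega⟩ : Fin 4)) id)
      = toSub p (j.map (fun a => (⟨a.1, by omega⟩ : Fin 4)) id) := by
    have := congrArg Subtype.val h
    rcases i with a | t | t <;> rcases j with b | u | u <;>
      (try fin_cases a) <;> (try fin_cases b) <;>
      simpa [toSub, toSubC] using this
  have := toSub_injective hp hodd h2
  rcases i with a | t | t <;> rcases j with b | u | u <;>
    simp only [Sum.map_inl, Sum.map_inr, Sum.inl.injEq, Sum.inr.injEq, id] at this ⊢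
  · fin_cases a <;> fin_cases b <;> simp_all
  all_goals simp_all

lemma toSubC_surjective (hp : p.Prime) (hodd : p ≠ 2) :
    Function.Surjective (toSubC p hp hodd) := by
  rintro ⟨H, hcyc⟩
  rcases subgroup_cases hp hodd H with h | h | ⟨t, h⟩ | h | ⟨t, h⟩ | h
  · exact ⟨Sum.inl 0, by simp [toSubC, h]⟩
  · exact ⟨Sum.inl 1, by simp [toSubC, h]⟩
  · exact ⟨Sum.inr (Sum.inl t), by simp [toSubC, h]⟩
  · exact absurd (h ▸ hcyc) (not_isCyclic_Om hp hodd)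
  · exact ⟨Sum.inr (Sum.inr t), by simp [toSubC, h]⟩
  · exact absurd (h ▸ hcyc) (not_isCyclic_top hp)

lemma card_cyclic_subgroup (hp : p.Prime) (hodd : p ≠ 2) :
    Nat.card {H : Subgroup (MG p) // IsCyclic H} = 2 * p + 2 := by
  haveI : NeZero p := ⟨hp.pos.ne'⟩
  rw [← Nat.card_eq_of_bijective _ ⟨toSubC_injective hp hodd, toSubC_surjective hp hodd⟩]
  rw [Nat.card_sum, Nat.card_sum, Nat.card_eq_fintype_card (α := Fin 2),
    Nat.card_zmod]
  simp [Fintype.card_fin]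
  ring

end Count

end MG

section CdegTheory

variable {G H : Type*} [Group G] [Group H]

/-- Subgroup lattice equivalence induced by a group isomorphism. -/
def subEquiv (e : G ≃* H) : Subgroup G ≃ Subgroup H where
  toFun K := K.map e.toMonoidHom
  invFun K := K.map e.symm.toMonoidHom
  left_inv K := by
    show (K.map e.toMonoidHom).map e.symm.toMonoidHom = K
    rw [Subgroup.map_map]
    convert Subgroup.map_id K
    ext x
    simp
  right_inv K := by
    show (K.map e.symm.toMonoidHom).map e.toMonoidHom = K
    rw [Subgroup.map_map]
    convert Subgroup.map_id K
    ext x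
    simp

lemma isCyclic_map (e : G ≃* H) (K : Subgroup G) (h : IsCyclic K) :
    IsCyclic (K.map e.toMonoidHom) :=
  haveI := h
  isCyclic_of_surjective (e.toMonoidHom.subgroupMap K)
    (e.toMonoidHom.subgroupMap_surjective K)

lemma isCyclic_subEquiv_iff (e : G ≃* H) (K : Subgroup G) :
    IsCyclic K ↔ IsCyclic (subEquiv e K) := by
  constructor
  · exact isCyclic_map e K
  · intro h
    have h2 := isCyclic_map e.symm (subEquiv e K) h
    have h3 : (subEquiv e K).map e.symm.toMonoidHom = K := (subEquiv e).left_inv K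
    rwa [h3] at h2

lemma cdeg_congr (e : G ≃* H) : cdeg G = cdeg H := by
  unfold cdeg
  rw [Nat.card_congr (subEquiv e),
    Nat.card_congr ((subEquiv e).subtypeEquiv
      (q := fun K : Subgroup H => IsCyclic K) (isCyclic_subEquiv_iff e))]

lemma cdeg_of_subsingleton (G : Type*) [Group G] [Subsingleton G] : cdeg G = 1 := by
  haveI : Subsingleton (Subgroup G) := by
    constructor
    intro K L
    ext x
    have hx : x = 1 := Subsingleton.elim x 1
    subst hx
    exact iff_of_true (one_mem K) (one_mem L)
  have h1 : Nat.card (Subgroup G) = 1 :=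
    Nat.card_eq_one_iff_unique.2 ⟨inferInstance, ⟨⊥⟩⟩
  have h2 : Nat.card {K : Subgroup G // IsCyclic K} = 1 := by
    refine Nat.card_eq_one_iff_unique.2 ⟨⟨fun a b => Subtype.ext (Subsingleton.elim _ _)⟩,
      ⟨⟨⊥, inferInstance⟩⟩⟩
  rw [cdeg, h1, h2]
  norm_num

end CdegTheory

section ProdTheory

variable {A B : Type*} [Group A] [Group B] [Finite A] [Finite B]

lemma zpow_recover {A : Type*} [Group A] [Finite A] {a : A} {n : ℕ}
    (hco : (Nat.Coprime (orderOf a) n)) : ∃ u : ℤ, (a ^ n) ^ u = a := by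
  have hIC : IsCoprime (n : ℤ) ((orderOf a : ℕ) : ℤ) := by
    rw [Int.isCoprime_iff_gcd_eq_one]
    simpa [Int.gcd_natCast_natCast] using (hco.symm : Nat.Coprime n (orderOf a))
  rcases hIC with ⟨u, v, huv⟩
  refine ⟨u, ?_⟩
  have h1 : a = a ^ ((u * n + v * orderOf a : ℤ)) := by rw [huv, zpow_one]
  have h2 : a ^ ((v * orderOf a : ℤ)) = 1 := by
    rw [mul_comm, zpow_mul, zpow_natCast, pow_orderOf_eq_one, one_zpow]
  calc (a ^ n) ^ u = a ^ ((u * n : ℤ)) := by rw [← zpow_natCast a n, ← zpow_mul, mul_comm]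
    _ = a ^ ((u * n : ℤ)) * a ^ ((v * orderOf a : ℤ)) := by rw [h2, mul_one]
    _ = a ^ ((u * n + v * orderOf a : ℤ)) := (zpow_add a _ _).symm
    _ = a := h1.symm

lemma single_mem_left (hc : (Nat.card A).Coprime (Nat.card B))
    {H : Subgroup (A × B)} {x : A × B} (hx : x ∈ H) : ((x.1, 1) : A × B) ∈ H := by
  have h1 : x ^ Nat.card B ∈ H := pow_mem hx _
  have h2 : x ^ Nat.card B = (x.1 ^ Nat.card B, 1) := by
    refine Prod.ext rfl ?_
    show x.2 ^ Nat.card B = 1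
    exact pow_card_eq_one'
  rw [h2] at h1
  have hco : Nat.Coprime (orderOf x.1) (Nat.card B) :=
    Nat.Coprime.coprime_dvd_left (orderOf_dvd_natCard x.1) hc
  rcases zpow_recover hco with ⟨u, hu⟩
  have h3 := zpow_mem h1 u
  have h4 : ((x.1 ^ Nat.card B, 1) : A × B) ^ u = (x.1, 1) := by
    refine Prod.ext ?_ ?_
    · show (x.1 ^ Nat.card B) ^ u = x.1
      exact hu
    · show (1 : B) ^ u = 1
      exact one_zpow u
  rwa [h4] at h3

lemma single_mem_right (hc : (Nat.card A).Coprime (Nat.card B))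
    {H : Subgroup (A × B)} {x : A × B} (hx : x ∈ H) : ((1, x.2) : A × B) ∈ H := by
  have h1 : x ^ Nat.card A ∈ H := pow_mem hx _
  have h2 : x ^ Nat.card A = (1, x.2 ^ Nat.card A) := by
    refine Prod.ext ?_ rfl
    show x.1 ^ Nat.card A = 1
    exact pow_card_eq_one'
  rw [h2] at h1
  have hco : Nat.Coprime (orderOf x.2) (Nat.card A) :=
    Nat.Coprime.coprime_dvd_left (orderOf_dvd_natCard x.2) hc.symm
  rcases zpow_recover hco with ⟨u, hu⟩
  have h3 := zpow_mem h1 u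
  have h4 : (((1 : A), x.2 ^ Nat.card A) : A × B) ^ u = (1, x.2) := by
    refine Prod.ext ?_ ?_
    · show (1 : A) ^ u = 1
      exact one_zpow u
    · show (x.2 ^ Nat.card A) ^ u = x.2
      exact hu
  rwa [h4] at h3

lemma subgroup_eq_prod (hc : (Nat.card A).Coprime (Nat.card B)) (H : Subgroup (A × B)) :
    H = (H.map (MonoidHom.fst A B)).prod (H.map (MonoidHom.snd A B)) := by
  apply le_antisymm
  · intro x hx
    exact Subgroup.mem_prod.2 ⟨⟨x, hx, rfl⟩, ⟨x, hx, rfl⟩⟩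
  · rintro ⟨a, b⟩ hab
    rw [Subgroup.mem_prod] at hab
    obtain ⟨⟨x, hxH, hx1⟩, ⟨y, hyH, hy2⟩⟩ := hab
    have h1 : ((a, 1) : A × B) ∈ H := by
      have := single_mem_left hc hxH
      rwa [show (x.1 : A) = a from hx1] at this
    have h2 : ((1, b) : A × B) ∈ H := by
      have := single_mem_right hc hyH
      rwa [show (y.2 : B) = b from hy2] at this
    have h3 : ((a, 1) : A × B) * (1, b) = (a, b) := by
      rw [Prod.mk_mul_mk, mul_one, one_mul]
    rw [← h3]
    exact mul_mem h1 h2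

lemma map_fst_prod (K1 : Subgroup A) (K2 : Subgroup B) :
    (K1.prod K2).map (MonoidHom.fst A B) = K1 := by
  ext a
  constructor
  · rintro ⟨x, hx, rfl⟩
    exact (Subgroup.mem_prod.1 hx).1
  · intro ha
    exact ⟨(a, 1), Subgroup.mem_prod.2 ⟨ha, one_mem _⟩, rfl⟩

lemma map_snd_prod (K1 : Subgroup A) (K2 : Subgroup B) :
    (K1.prod K2).map (MonoidHom.snd A B) = K2 := by
  ext b
  constructor
  · rintro ⟨x, hx, rfl⟩
    exact (Subgroup.mem_prod.1 hx).2
  · intro hb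
    exact ⟨(1, b), Subgroup.mem_prod.2 ⟨one_mem _, hb⟩, rfl⟩

/-- For coprime finite groups, subgroups of the product are products of
subgroups. -/
noncomputable def subgroupProdEquiv (hc : (Nat.card A).Coprime (Nat.card B)) :
    Subgroup (A × B) ≃ Subgroup A × Subgroup B where
  toFun H := (H.map (MonoidHom.fst A B), H.map (MonoidHom.snd A B))
  invFun K := K.1.prod K.2
  left_inv H := (subgroup_eq_prod hc H).symm
  right_inv K := Prod.ext (map_fst_prod K.1 K.2) (map_snd_prod K.1 K.2)

lemma isCyclic_prod {A B : Type*} [Group A] [Group B] [Finite A] [Finite B]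
    [IsCyclic A] [IsCyclic B] (hc : (Nat.card A).Coprime (Nat.card B)) :
    IsCyclic (A × B) := by
  obtain ⟨g1, hg1⟩ := IsCyclic.exists_generator (α := A)
  obtain ⟨g2, hg2⟩ := IsCyclic.exists_generator (α := B)
  apply isCyclic_of_orderOf_eq_card ((g1, g2) : A × B)
  rw [Prod.orderOf_mk, orderOf_eq_card_of_forall_mem_zpowers hg1,
    orderOf_eq_card_of_forall_mem_zpowers hg2, Nat.Coprime.lcm_eq_mul hc,
    Nat.card_prod]

lemma isCyclic_iff_prod (hc : (Nat.card A).Coprime (Nat.card B)) (H : Subgroup (A × B)) :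
    IsCyclic H ↔ IsCyclic (H.map (MonoidHom.fst A B)) ∧ IsCyclic (H.map (MonoidHom.snd A B)) := by
  constructor
  · intro h
    haveI := h
    exact ⟨isCyclic_of_surjective ((MonoidHom.fst A B).subgroupMap H)
        ((MonoidHom.fst A B).subgroupMap_surjective H),
      isCyclic_of_surjective ((MonoidHom.snd A B).subgroupMap H)
        ((MonoidHom.snd A B).subgroupMap_surjective H)⟩
  · rintro ⟨h1, h2⟩
    set K1 := H.map (MonoidHom.fst A B)
    set K2 := H.map (MonoidHom.snd A B)
    haveI := h1
    haveI := h2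
    have hcc : (Nat.card K1).Coprime (Nat.card K2) :=
      Nat.Coprime.coprime_dvd_left (Subgroup.card_subgroup_dvd_card K1)
        (Nat.Coprime.coprime_dvd_right (Subgroup.card_subgroup_dvd_card K2) hc)
    have hKK : IsCyclic (K1 × K2) := isCyclic_prod hcc
    have := isCyclic_of_surjective (G' := K1 × K2) (Subgroup.prodEquiv K1 K2).symm.toMonoidHom
      (Subgroup.prodEquiv K1 K2).symm.surjective
    rw [subgroup_eq_prod hc H]
    exact this

lemma cdeg_prod (hc : (Nat.card A).Coprime (Nat.card B)) :
    cdeg (A × B) = cdeg A * cdeg B := by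
  unfold cdeg
  rw [div_mul_div_comm]
  congr 1
  · rw [← Nat.cast_mul, ← Nat.card_prod]
    congr 1
    apply Nat.card_congr
    exact ((subgroupProdEquiv hc).subtypeEquiv
        (q := fun K : Subgroup A × Subgroup B => IsCyclic K.1 ∧ IsCyclic K.2)
        (isCyclic_iff_prod hc)).trans
      (Equiv.subtypeProdEquivProd (p := fun K : Subgroup A => IsCyclic K)
        (q := fun K : Subgroup B => IsCyclic K))
  · rw [← Nat.cast_mul, ← Nat.card_prod]
    congr 1
    exact Nat.card_congr (subgroupProdEquiv hc)

end ProdTheory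

section PiTheory

/-- `MulEquiv` version of `Equiv.piCongrLeft'`. -/
def MulEquiv.piCongrLeft'' {α β : Type*} (P : α → Type*) [∀ a, Group (P a)] (e : α ≃ β) :
    (∀ a, P a) ≃* ∀ b, P (e.symm b) :=
  { Equiv.piCongrLeft' P e with map_mul' := fun _ _ => rfl }

/-- `MulEquiv` version of `Equiv.piOptionEquivProd`. -/
def MulEquiv.piOptionEquivProd' {α : Type*} {β : Option α → Type*} [∀ o, Group (β o)] :
    (∀ o, β o) ≃* β none × ∀ a, β (some a) :=
  { Equiv.piOptionEquivProd with map_mul' := fun _ _ => rfl }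

/-- Splitting a pi type over an inserted finset. -/
noncomputable def piFinsetInsertEquiv (β : ℕ → Type) [∀ i, Group (β i)] {x : ℕ}
    {t : Finset ℕ} (h : x ∉ t) :
    (∀ i : (insert x t : Finset ℕ), β i) ≃* β x × ∀ i : t, β i :=
  (MulEquiv.piCongrLeft'' (fun i : (insert x t : Finset ℕ) => β i)
      (Finset.subtypeInsertEquivOption h)).trans
    (MulEquiv.piOptionEquivProd'
      (β := fun o => β (((Finset.subtypeInsertEquivOption h).symm o) : ℕ)))

lemma cdeg_pi (β : ℕ → Type) [∀ i, Group (β i)] [∀ i, Finite (β i)] (s : Finset ℕ) :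
    (∀ i ∈ s, ∀ j ∈ s, i ≠ j → (Nat.card (β i)).Coprime (Nat.card (β j))) →
    cdeg (∀ i : s, β i) = ∏ i ∈ s, cdeg (β i) := by
  induction s using Finset.induction_on with
  | empty =>
    intro _
    rw [Finset.prod_empty]
    haveI : Subsingleton (∀ i : (∅ : Finset ℕ), β i) :=
      ⟨fun f g => funext fun i => absurd i.2 (Finset.notMem_empty _)⟩
    exact cdeg_of_subsingleton _
  | @insert a s hx ih =>
    intro hco
    rw [cdeg_congr (piFinsetInsertEquiv β hx)]
    have hcop : (Nat.card (β a)).Coprime (Nat.card (∀ i : s, β i)) := by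
      rw [Nat.card_pi]
      apply Nat.Coprime.prod_right
      intro i _
      exact hco a (Finset.mem_insert_self a s) i (Finset.mem_insert_of_mem i.2)
        (fun h => hx (h ▸ i.2))
    rw [cdeg_prod hcop,
      ih (fun i hi j hj hij =>
        hco i (Finset.mem_insert_of_mem hi) j (Finset.mem_insert_of_mem hj) hij),
      Finset.prod_insert hx]

end PiTheory

section OddPrimes

lemma oddPrimes_infinite : {q : ℕ | Nat.Prime q ∧ q ≠ 2}.Infinite := by
  have h2 : {q : ℕ | Nat.Prime q ∧ q ≠ 2} = {q | Nat.Prime q} \ {2} := by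
    ext q
    simp [Set.mem_diff, Set.mem_setOf_eq]
  rw [h2]
  exact Nat.infinite_setOf_prime.diff (Set.finite_singleton 2)

lemma oddPrime_spec (k : ℕ) : (oddPrime k).Prime ∧ oddPrime k ≠ 2 :=
  Nat.nth_mem_of_infinite oddPrimes_infinite k

lemma oddPrime_strictMono : StrictMono oddPrime :=
  Nat.nth_strictMono oddPrimes_infinite

lemma oddPrime_injective : Function.Injective oddPrime :=
  oddPrime_strictMono.injective

lemma oddPrime_three_le (k : ℕ) : 3 ≤ oddPrime k := by
  have h := oddPrime_spec k
  have := h.1.two_le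
  rcases Nat.lt_or_ge (oddPrime k) 3 with h3 | h3
  · interval_cases (oddPrime k)
    · exact absurd rfl h.2
  · exact h3

lemma isModular_MG {p : ℕ} (hp : p.Prime) (hodd : p ≠ 2) : IsModularPCubed p (MG p) :=
  ⟨MG.card hp.pos.ne', MG.exponent hp hodd, MG.not_comm hp⟩

lemma cdeg_MG {p : ℕ} (hp : p.Prime) (hodd : p ≠ 2) :
    cdeg (MG p) = ((p : ℝ) + 1) / ((p : ℝ) + 2) := by
  rw [cdeg, MG.card_cyclic_subgroup hp hodd, MG.card_subgroup hp hodd]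
  have h1 : ((2 * p + 4 : ℕ) : ℝ) ≠ 0 := by positivity
  have h2 : ((p : ℝ) + 2) ≠ 0 := by positivity
  rw [div_eq_div_iff h1 h2]
  push_cast
  ring

/-- the cyclicity degree of `MG (oddPrime k)`, as a real sequence. -/
noncomputable def cseq (k : ℕ) : ℝ :=
  ((oddPrime k : ℝ) + 1) / ((oddPrime k : ℝ) + 2)

lemma cseq_pos (k : ℕ) : 0 < cseq k := by
  unfold cseq; positivity

lemma cseq_lt_one (k : ℕ) : cseq k < 1 := by
  unfold cseq
  rw [div_lt_one (by positivity)]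
  linarith

lemma cseq_eq (k : ℕ) : cseq k = 1 - 1 / ((oddPrime k : ℝ) + 2) := by
  unfold cseq
  have h2 : ((oddPrime k : ℝ) + 2) ≠ 0 := by positivity
  field_simp
  ring

lemma cseq_mono : Monotone cseq := by
  intro k l hkl
  unfold cseq
  have h := Nat.cast_le (α := ℝ) |>.2 (oddPrime_strictMono.monotone hkl)
  rw [div_le_div_iff₀ (by positivity) (by positivity)]
  nlinarith

lemma oddPrime_tendsto : Tendsto (fun k => (oddPrime k : ℝ)) atTop atTop := by
  apply tendsto_natCast_atTop_atTop.comp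
  apply tendsto_atTop_mono (fun n => oddPrime_strictMono.le_apply (f := oddPrime))
  exact tendsto_id

lemma cseq_tendsto_one : Tendsto cseq atTop (nhds 1) := by
  have h1 : Tendsto (fun k => ((oddPrime k : ℝ) + 2)) atTop atTop :=
    tendsto_atTop_add_const_right _ 2 oddPrime_tendsto
  have h2 : Tendsto (fun k => 1 / ((oddPrime k : ℝ) + 2)) atTop (nhds 0) := by
    simpa [Pi.inv_def] using h1.inv_tendsto_atTop
  have h3 := (tendsto_const_nhds (x := (1 : ℝ)) (f := atTop)).sub h2
  rw [sub_zero] at h3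
  exact h3.congr (fun k => (cseq_eq k).symm)

noncomputable def oddPrimeEquiv : ℕ ≃ {q : ℕ // q ∈ {q : ℕ | Nat.Prime q ∧ q ≠ 2}} :=
  Equiv.ofBijective (fun k => ⟨oddPrime k, oddPrime_spec k⟩)
    ⟨fun a b hab => oddPrime_injective (congrArg Subtype.val hab), by
      rintro ⟨q, hq⟩
      have h : q ∈ Set.range (Nat.nth (fun q => Nat.Prime q ∧ q ≠ 2)) := by
        rw [Nat.range_nth_of_infinite oddPrimes_infinite]
        exact hq
      rcases h with ⟨k, hk⟩
      exact ⟨k, Subtype.ext hk⟩⟩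

lemma not_summable_inv_oddPrime : ¬ Summable (fun k => 1 / ((oddPrime k : ℝ) + 2)) := by
  intro hs
  have h1 : Summable (fun k => (1 : ℝ) / (oddPrime k)) := by
    apply Summable.of_nonneg_of_le (fun k => by positivity) (fun k => ?_) (hs.mul_left 3)
    have h3 : (3 : ℝ) ≤ (oddPrime k : ℝ) := by exact_mod_cast oddPrime_three_le k
    have h4 : (0:ℝ) < (oddPrime k : ℝ) := by linarith
    have h5 : (0:ℝ) < (oddPrime k : ℝ) + 2 := by linarith
    have h6 : (3:ℝ) * (1 / ((oddPrime k:ℝ)+2)) = 3 / ((oddPrime k:ℝ)+2) := by ring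
    rw [h6, div_le_div_iff₀ h4 h5]
    linarith
  have h2 : Summable ((fun q : ℕ => (1 : ℝ) / q) ∘
      ((↑) : {q : ℕ // q ∈ {q : ℕ | Nat.Prime q ∧ q ≠ 2}} → ℕ)) := by
    rw [← Equiv.summable_iff oddPrimeEquiv]
    have hfun : (((fun q : ℕ => (1 : ℝ) / q) ∘
        ((↑) : {q : ℕ // q ∈ {q : ℕ | Nat.Prime q ∧ q ≠ 2}} → ℕ)) ∘ oddPrimeEquiv)
        = fun k => (1:ℝ)/(oddPrime k) := funext fun k => rfl
    rw [hfun]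
    exact h1
  have h3 : Summable (Set.indicator {q : ℕ | Nat.Prime q ∧ q ≠ 2}
      (fun q : ℕ => (1 : ℝ) / q)) := summable_subtype_iff_indicator.1 h2
  have h4 : Summable (Set.indicator ({2} : Set ℕ) (fun q : ℕ => (1 : ℝ) / q)) := by
    apply summable_of_ne_finset_zero (s := {2})
    intro n hn
    apply Set.indicator_of_notMem
    simpa using hn
  have h5 : Summable (Set.indicator {p : ℕ | p.Prime} (fun q : ℕ => (1 : ℝ) / q)) := by
    have := h3.add h4
    apply this.congr
    intro n
    by_cases hn2 : n = 2
    · subst hn2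
      rw [Set.indicator_of_notMem (by simp), Set.indicator_of_mem (by simp),
        Set.indicator_of_mem (by simp [Nat.prime_two])]
      ring
    · by_cases hnp : n.Prime
      · rw [Set.indicator_of_mem (by exact ⟨hnp, hn2⟩), Set.indicator_of_notMem (by simpa),
          Set.indicator_of_mem (by exact hnp)]
        ring
      · rw [Set.indicator_of_notMem (by simp [hnp]), Set.indicator_of_notMem (by simpa),
          Set.indicator_of_notMem (by exact hnp)]
        ring
  exact not_summable_one_div_on_primes h5

end OddPrimes

section Products

noncomputable def Rprod (n : ℕ) : ℝ := ∏ k ∈ Finset.range n, cseq k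

lemma Rprod_pos (n : ℕ) : 0 < Rprod n := Finset.prod_pos (fun k _ => cseq_pos k)

lemma sums_tendsto :
    Tendsto (fun n => ∑ k ∈ Finset.range n, 1/((oddPrime k:ℝ)+2)) atTop atTop :=
  (not_summable_iff_tendsto_nat_atTop_of_nonneg
    (fun k => by positivity)).1 not_summable_inv_oddPrime

lemma Rprod_le (n : ℕ) :
    Rprod n ≤ Real.exp (-(∑ k ∈ Finset.range n, 1/((oddPrime k:ℝ)+2))) := by
  have h1 : Real.exp (-(∑ k ∈ Finset.range n, 1/((oddPrime k:ℝ)+2)))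
      = ∏ k ∈ Finset.range n, Real.exp (-(1/((oddPrime k:ℝ)+2))) := by
    rw [← Real.exp_sum, ← Finset.sum_neg_distrib]
  rw [h1, Rprod]
  apply Finset.prod_le_prod (fun k _ => (cseq_pos k).le) (fun k _ => ?_)
  rw [cseq_eq]
  have h2 := Real.add_one_le_exp (-(1/((oddPrime k:ℝ)+2)))
  linarith

lemma Rprod_tendsto_zero : Tendsto Rprod atTop (nhds 0) := by
  apply squeeze_zero (fun n => (Rprod_pos n).le) Rprod_le
  exact Real.tendsto_exp_atBot.comp (tendsto_neg_atTop_atBot.comp sums_tendsto)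

lemma Ico_prod_tendsto (n : ℕ) :
    Tendsto (fun K => ∏ k ∈ Finset.Ico n K, cseq k) atTop (nhds 0) := by
  have h1 : ∀ K, n ≤ K → ∏ k ∈ Finset.Ico n K, cseq k = Rprod K / Rprod n := by
    intro K hK
    rw [eq_div_iff (Rprod_pos n).ne']
    rw [mul_comm]
    exact Finset.prod_range_mul_prod_Ico _ hK
  have h2 : Tendsto (fun K => Rprod K / Rprod n) atTop (nhds 0) := by
    simpa using Rprod_tendsto_zero.div_const (Rprod n)
  refine h2.congr' ?_
  filter_upwards [eventually_ge_atTop n] with K hK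
  exact (h1 K hK).symm

instance instFiniteMGodd (i : ℕ) : Finite (MG (oddPrime i)) :=
  MG.finite (oddPrime_spec i).1.pos.ne'

lemma cdeg_pi_odd (s : Finset ℕ) :
    cdeg (∀ i : s, MG (oddPrime i)) = ∏ i ∈ s, cseq i := by
  rw [cdeg_pi (fun i => MG (oddPrime i)) s ?hco]
  · apply Finset.prod_congr rfl
    intro i _
    rw [cdeg_MG (oddPrime_spec i).1 (oddPrime_spec i).2]
    rfl
  case hco =>
    intro i _ j _ hij
    rw [MG.card (oddPrime_spec i).1.pos.ne', MG.card (oddPrime_spec j).1.pos.ne']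
    exact Nat.Coprime.pow _ _
      ((Nat.coprime_primes (oddPrime_spec i).1 (oddPrime_spec j).1).2
        (fun h => hij (oddPrime_injective h)))

end Products

open Finset in
/-- For every `a ∈ [0, 1]` there is a sequence `(G_n)` of finite groups with
`cdeg (G_n) → a`, where each `G_n` is a finite direct product of modular groups
`M_{p³}` over distinct odd primes `p`. -/
theorem cdeg_dense_in_unit_interval (a : ℝ) (ha : a ∈ Set.Icc (0 : ℝ) 1) :
    ∃ G : ℕ → GrpCat, (∀ n, Finite (G n)) ∧
      Tendsto (fun n => cdeg (G n)) atTop (nhds a) ∧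
      ∀ n, ∃ (I : Finset ℕ) (H : I → GrpCat), (∀ i, Finite (H i)) ∧
        (∀ i : I, IsModularPCubed (oddPrime i) (H i)) ∧
        Nonempty ((G n : Type) ≃* ∀ i : I, (H i : Type)) := by
  obtain ⟨ha0, ha1⟩ := ha
  have key : ∃ Sf : ℕ → Finset ℕ,
      Tendsto (fun n => ∏ i ∈ Sf n, cseq i) atTop (nhds a) := by
    rcases eq_or_lt_of_le ha0 with h0 | h0
    · exact ⟨fun n => Finset.range n, by rw [← h0]; exact Rprod_tendsto_zero⟩
    · classical
      have hex : ∀ n, ∃ K, ∏ k ∈ Finset.Ico n K, cseq k < a := by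
        intro n
        exact ((Ico_prod_tendsto n).eventually (gt_mem_nhds h0)).exists
      refine ⟨fun n => Finset.Ico n (Nat.find (hex n)), ?_⟩
      apply tendsto_of_tendsto_of_tendsto_of_le_of_le
        (g := fun n => a * cseq n) (h := fun _ => a)
      · simpa using (tendsto_const_nhds (x := a) (f := atTop)).mul cseq_tendsto_one
      · exact tendsto_const_nhds
      · intro n
        have hfind : ∏ k ∈ Finset.Ico n (Nat.find (hex n)), cseq k < a :=
          Nat.find_spec (hex n)
        have hKn : n < Nat.find (hex n) := by
          by_contra h
          push_neg at h
          rw [Finset.Ico_eq_empty (by omega), Finset.prod_empty] at hfind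
          linarith
        have hm : ¬ (∏ k ∈ Finset.Ico n (Nat.find (hex n) - 1), cseq k < a) :=
          Nat.find_min (hex n) (by omega)
        push_neg at hm
        have hK1 : Nat.find (hex n) - 1 + 1 = Nat.find (hex n) := by omega
        have hsplit : ∏ k ∈ Finset.Ico n (Nat.find (hex n)), cseq k
            = (∏ k ∈ Finset.Ico n (Nat.find (hex n) - 1), cseq k)
              * cseq (Nat.find (hex n) - 1) := by
          conv_lhs => rw [← hK1]
          rw [Finset.prod_Ico_succ_top (by omega)]
        refine le_trans
          (mul_le_mul hm (cseq_mono (by omega)) (cseq_pos n).le (le_trans h0.le hm))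
          (le_of_eq hsplit.symm)
      · intro n
        exact (Nat.find_spec (hex n)).le
  rcases key with ⟨Sf, hSf⟩
  refine ⟨fun n => GrpCat.of (∀ i : (Sf n), MG (oddPrime i)), ?_, ?_, ?_⟩
  · intro n
    exact (inferInstance : Finite (∀ i : (Sf n), MG (oddPrime i)))
  · exact Tendsto.congr (fun n => (cdeg_pi_odd (Sf n)).symm) hSf
  · intro n
    refine ⟨Sf n, fun i => GrpCat.of (MG (oddPrime i)), fun i => ?_, fun i => ?_,
      ⟨MulEquiv.refl _⟩⟩
    · exact (inferInstance : Finite (MG (oddPrime i)))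
    · exact isModular_MG (oddPrime_spec i).1 (oddPrime_spec i).2
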